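/- Every simple group of order 60 is isomorphic to the alternating group A₅. -/

import Mathlib

open Subgroup Equiv

section Aux
variable {G : Type*} [Group G] [IsSimpleGroup G]

lemma aux_toPerm_inj (H : Subgroup G) (hH : H ≠ ⊤) :
    Function.Injective (MulAction.toPermHom G (G ⧸ H)) := by
  rw [← MonoidHom.ker_eq_bot_iff, ← H.normalCore_eq_ker]
  rcases H.normalCore_normal.eq_bot_or_eq_top with h | h
  · exact h
  · exact absurd (top_le_iff.mp (h ▸ H.normalCore_le)) hH

lemma aux_card_dvd (H : Subgroup G) [Finite G] (hH : H ≠ ⊤) :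
    Nat.card G ∣ Nat.factorial H.index := by
  classical
  have hf := aux_toPerm_inj H hH
  have h1 : Nat.card G = Nat.card (MulAction.toPermHom G (G ⧸ H)).range :=
    Nat.card_congr (Equiv.ofInjective _ hf)
  rw [h1]
  have h2 := Subgroup.card_subgroup_dvd_card (MulAction.toPermHom G (G ⧸ H)).range
  have h3 : Nat.card (Equiv.Perm (G ⧸ H)) = Nat.factorial H.index := by
    have : Fintype (G ⧸ H) := Fintype.ofFinite _
    rw [Nat.card_eq_fintype_card, Fintype.card_perm, H.index_eq_card, Nat.card_eq_fintype_card]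
  rwa [h3] at h2

lemma aux_five_le_index (hcard : Nat.card G = 60) (H : Subgroup G) (hH : H ≠ ⊤) :
    5 ≤ H.index := by
  have : Finite G := Nat.finite_of_card_ne_zero (by omega)
  by_contra hlt
  push_neg at hlt
  have h1 : Nat.factorial H.index ∣ 24 := by
    calc Nat.factorial H.index ∣ Nat.factorial 4 := Nat.factorial_dvd_factorial (by omega)
    _ = 24 := by norm_num [Nat.factorial]
  have h2 := (aux_card_dvd H hH).trans h1
  rw [hcard] at h2
  exact absurd (Nat.le_of_dvd (by norm_num) h2) (by norm_num)


lemma aux_iso_of_index_five (hcard : Nat.card G = 60) (N : Subgroup G)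
    (hN : N.index = 5) : Nonempty (G ≃* alternatingGroup (Fin 5)) := by
  classical
  have : Finite G := Nat.finite_of_card_ne_zero (by omega)
  have hNtop : N ≠ ⊤ := fun h => by simp [h, Subgroup.index_top] at hN
  have hf := aux_toPerm_inj N hNtop
  have hq : Nat.card (G ⧸ N) = 5 := by rw [← N.index_eq_card, hN]
  have : Finite (G ⧸ N) := Quotient.finite _
  obtain e : (G ⧸ N) ≃ Fin 5 := by
    have : Fintype (G ⧸ N) := Fintype.ofFinite _
    exact Fintype.equivFinOfCardEq (by rw [← Nat.card_eq_fintype_card, hq])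
  let ψ : G →* Equiv.Perm (Fin 5) :=
    (Equiv.Perm.viaEmbeddingHom e.toEmbedding).comp (MulAction.toPermHom G (G ⧸ N))
  have hψ : Function.Injective ψ :=
    (Equiv.Perm.viaEmbeddingHom_injective e.toEmbedding).comp hf
  have hsign : ∀ g : G, ψ g ∈ alternatingGroup (Fin 5) := by
    rcases (Equiv.Perm.sign.comp ψ).normal_ker.eq_bot_or_eq_top with h | h
    · exfalso
      have hinj : Function.Injective (Equiv.Perm.sign.comp ψ) :=
        (MonoidHom.ker_eq_bot_iff _).mp h
      have := Nat.card_le_card_of_injective _ hinj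
      rw [hcard] at this
      have h2 : Nat.card ℤˣ = 2 := by
        rw [Nat.card_eq_fintype_card]; decide
      omega
    · intro g
      have : g ∈ (Equiv.Perm.sign.comp ψ).ker := by rw [h]; trivial
      exact Equiv.Perm.mem_alternatingGroup.mpr this
  let χ : G →* alternatingGroup (Fin 5) := ψ.codRestrict _ hsign
  have hχ : Function.Injective χ := fun a b hab => hψ (congrArg Subtype.val hab)
  have hcardA : Nat.card (alternatingGroup (Fin 5)) = 60 := by
    rw [Nat.card_eq_fintype_card]
    have h5 := two_mul_card_alternatingGroup (α := Fin 5)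
    have h6 : Fintype.card (Equiv.Perm (Fin 5)) = 120 := by
      rw [Fintype.card_perm, Fintype.card_fin]; decide
    rw [h6] at h5
    omega
  have hbij : Function.Bijective χ :=
    (Nat.bijective_iff_injective_and_card χ).mpr ⟨hχ, by rw [hcard, hcardA]⟩
  exact ⟨MulEquiv.ofBijective χ hbij⟩


theorem fact60_2 : Nat.factorization 60 2 = 2 := by
  have : (60:ℕ) = 2^2 * 15 := by norm_num
  rw [this, Nat.factorization_mul (by norm_num) (by norm_num)]
  rw [Nat.Prime.factorization_pow (by norm_num)]
  simp [Nat.factorization_eq_zero_of_not_dvd (show ¬((2:ℕ) ∣ 15) by norm_num)]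

theorem fact60_5 : Nat.factorization 60 5 = 1 := by
  have : (60:ℕ) = 5^1 * 12 := by norm_num
  rw [this, Nat.factorization_mul (by norm_num) (by norm_num)]
  rw [Nat.Prime.factorization_pow (by norm_num)]
  simp [Nat.factorization_eq_zero_of_not_dvd (show ¬((5:ℕ) ∣ 12) by norm_num)]

lemma aux_norm_ne_top (hcard : Nat.card G = 60) {p : ℕ} [Fact p.Prime]
    (P : Sylow p G) (hp1 : Nat.card (P : Subgroup G) ≠ 1)
    (hp60 : Nat.card (P : Subgroup G) ≠ 60) :
    Subgroup.normalizer ((P : Subgroup G) : Set G) ≠ ⊤ := by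
  intro h
  rcases (Subgroup.normalizer_eq_top_iff.mp h).eq_bot_or_eq_top with h' | h'
  · exact hp1 (by rw [h', Subgroup.card_bot])
  · exact hp60 (by rw [h', Subgroup.card_top, hcard])

lemma aux_zpowers_eq (Q : Subgroup G) (hQ : Nat.card Q = 5) [Finite Q] {g : G}
    (hg : g ∈ Q) (h1 : g ≠ 1) : Subgroup.zpowers g = Q := by
  have hle : Subgroup.zpowers g ≤ Q := Subgroup.zpowers_le.mpr hg
  have hdvd : Nat.card (Subgroup.zpowers g) ∣ 5 := hQ ▸ Subgroup.card_dvd_of_le hle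
  have hne : Nat.card (Subgroup.zpowers g) ≠ 1 := by
    rw [Nat.card_zpowers]
    simpa [orderOf_eq_one_iff] using h1
  have h5 : Nat.card (Subgroup.zpowers g) = 5 :=
    (Nat.Prime.eq_one_or_self_of_dvd (p := 5) (by norm_num) _ hdvd).resolve_left hne
  exact Subgroup.eq_of_le_of_card_ge hle (by rw [h5, hQ])

lemma aux_exists_index_five (hcard : Nat.card G = 60) :
    ∃ N : Subgroup G, N.index = 5 := by
  classical
  have hfin : Finite G := Nat.finite_of_card_ne_zero (by omega)
  have hp2 : Fact (Nat.Prime 2) := ⟨by norm_num⟩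
  have hp5 : Fact (Nat.Prime 5) := ⟨by norm_num⟩
  have hfs2 : Finite (Sylow 2 G) := by infer_instance
  have hfs5 : Finite (Sylow 5 G) := by infer_instance
  have hcard2 : ∀ P : Sylow 2 G, Nat.card (P : Subgroup G) = 4 := fun P => by
    rw [Sylow.card_eq_multiplicity, hcard, fact60_2]; norm_num
  have hcard5 : ∀ Q : Sylow 5 G, Nat.card (Q : Subgroup G) = 5 := fun Q => by
    rw [Sylow.card_eq_multiplicity, hcard, fact60_5]; norm_num
  have hidx2 : ∀ P : Sylow 2 G, (P : Subgroup G).index = 15 := fun P => by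
    have h := Subgroup.card_mul_index (P : Subgroup G)
    rw [hcard2 P, hcard] at h; omega
  have hidx5 : ∀ Q : Sylow 5 G, (Q : Subgroup G).index = 12 := fun Q => by
    have h := Subgroup.card_mul_index (Q : Subgroup G)
    rw [hcard5 Q, hcard] at h; omega
  obtain ⟨P⟩ : Nonempty (Sylow 2 G) := inferInstance
  have hn2a : Nat.card (Sylow 2 G) = (Subgroup.normalizer ((P : Subgroup G) : Set G)).index :=
    Sylow.card_eq_index_normalizer P
  have hge2 : 5 ≤ Nat.card (Sylow 2 G) := by
    rw [hn2a]
    exact aux_five_le_index hcard _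
      (aux_norm_ne_top hcard P (by rw [hcard2]; norm_num) (by rw [hcard2]; norm_num))
  have hdvd2 : Nat.card (Sylow 2 G) ∣ 15 := by
    have h := Sylow.card_dvd_index P; rwa [hidx2 P] at h
  have h2cases : Nat.card (Sylow 2 G) = 5 ∨ Nat.card (Sylow 2 G) = 15 := by
    set n := Nat.card (Sylow 2 G) with hn
    have hle : n ≤ 15 := Nat.le_of_dvd (by norm_num) hdvd2
    interval_cases n <;> omega
  rcases h2cases with h5 | h15
  · exact ⟨Subgroup.normalizer ((P : Subgroup G) : Set G), by rw [← hn2a, h5]⟩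
  -- n₂ = 15 case
  obtain ⟨Q0⟩ : Nonempty (Sylow 5 G) := inferInstance
  have hn5 : Nat.card (Sylow 5 G) = 6 := by
    have hn5a : Nat.card (Sylow 5 G) = (Subgroup.normalizer ((Q0 : Subgroup G) : Set G)).index :=
      Sylow.card_eq_index_normalizer Q0
    have hge5 : 5 ≤ Nat.card (Sylow 5 G) := by
      rw [hn5a]
      exact aux_five_le_index hcard _
        (aux_norm_ne_top hcard Q0 (by rw [hcard5]; norm_num) (by rw [hcard5]; norm_num))
    have hdvd5 : Nat.card (Sylow 5 G) ∣ 12 := by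
      have h := Sylow.card_dvd_index Q0; rwa [hidx5 Q0] at h
    have hmod : Nat.card (Sylow 5 G) % 5 = 1 % 5 := card_sylow_modEq_one 5 G
    set m := Nat.card (Sylow 5 G) with hm
    have hle : m ≤ 12 := Nat.le_of_dvd (by norm_num) hdvd5
    interval_cases m <;> omega
  by_cases hPQ : ∀ P1 Q1 : Sylow 2 G, P1 ≠ Q1 →
      (P1 : Subgroup G) ⊓ (Q1 : Subgroup G) = ⊥
  · exfalso
    have : Fintype G := Fintype.ofFinite G
    have : Fintype (Sylow 2 G) := Fintype.ofFinite _
    have : Fintype (Sylow 5 G) := Fintype.ofFinite _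
    set F2 : Sylow 2 G → Finset G :=
      fun R => (Set.toFinset ((R : Subgroup G) : Set G)).erase 1 with hF2
    set F5 : Sylow 5 G → Finset G :=
      fun R => (Set.toFinset ((R : Subgroup G) : Set G)).erase 1 with hF5
    have hmem2 : ∀ (R : Sylow 2 G) (g : G), g ∈ F2 R ↔ g ≠ 1 ∧ g ∈ (R : Subgroup G) := by
      intro R g
      simp [hF2, Finset.mem_erase, Set.mem_toFinset]; exact fun _ => Iff.rfl
    have hmem5 : ∀ (R : Sylow 5 G) (g : G), g ∈ F5 R ↔ g ≠ 1 ∧ g ∈ (R : Subgroup G) := by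
      intro R g
      simp [hF5, Finset.mem_erase, Set.mem_toFinset]; exact fun _ => Iff.rfl
    have hF2card : ∀ R : Sylow 2 G, (F2 R).card = 3 := by
      intro R
      rw [hF2]
      rw [Finset.card_erase_of_mem (by simp [Set.mem_toFinset])]
      have h4 : Fintype.card ((R : Subgroup G) : Set G) = 4 := by
        rw [← Nat.card_eq_fintype_card]
        exact hcard2 R
      rw [Set.toFinset_card, h4]
    have hF5card : ∀ R : Sylow 5 G, (F5 R).card = 4 := by
      intro R
      rw [hF5]
      rw [Finset.card_erase_of_mem (by simp [Set.mem_toFinset])]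
      have h5 : Fintype.card ((R : Subgroup G) : Set G) = 5 := by
        rw [← Nat.card_eq_fintype_card]
        exact hcard5 R
      rw [Set.toFinset_card, h5]
    have hdisj2 : ∀ a ∈ (Finset.univ : Finset (Sylow 2 G)), ∀ b ∈ Finset.univ,
        a ≠ b → Disjoint (F2 a) (F2 b) := by
      intro a _ b _ hab
      rw [Finset.disjoint_left]
      intro g hga hgb
      obtain ⟨hg1, hga'⟩ := (hmem2 a g).mp hga
      obtain ⟨_, hgb'⟩ := (hmem2 b g).mp hgb
      have : g ∈ ((a : Subgroup G) ⊓ (b : Subgroup G)) := ⟨hga', hgb'⟩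
      rw [hPQ a b hab] at this
      exact hg1 this
    have hdisj5 : ∀ a ∈ (Finset.univ : Finset (Sylow 5 G)), ∀ b ∈ Finset.univ,
        a ≠ b → Disjoint (F5 a) (F5 b) := by
      intro a _ b _ hab
      rw [Finset.disjoint_left]
      intro g hga hgb
      obtain ⟨hg1, hga'⟩ := (hmem5 a g).mp hga
      obtain ⟨_, hgb'⟩ := (hmem5 b g).mp hgb
      have ha := aux_zpowers_eq (a : Subgroup G) (hcard5 a) hga' hg1
      have hb := aux_zpowers_eq (b : Subgroup G) (hcard5 b) hgb' hg1
      exact hab (Sylow.ext (ha ▸ hb))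
    set S2 := Finset.univ.biUnion F2 with hS2
    set S5 := Finset.univ.biUnion F5 with hS5
    have hS2card : S2.card = 45 := by
      rw [hS2, Finset.card_biUnion hdisj2]
      have : Fintype.card (Sylow 2 G) = 15 := by rw [← Nat.card_eq_fintype_card, h15]
      simp [hF2card, this]
    have hS5card : S5.card = 24 := by
      rw [hS5, Finset.card_biUnion hdisj5]
      have : Fintype.card (Sylow 5 G) = 6 := by rw [← Nat.card_eq_fintype_card, hn5]
      simp [hF5card, this]
    have hdisjS : Disjoint S2 S5 := by
      rw [Finset.disjoint_left]
      intro g hg2 hg5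
      obtain ⟨R2, _, hgR2⟩ := Finset.mem_biUnion.mp hg2
      obtain ⟨R5, _, hgR5⟩ := Finset.mem_biUnion.mp hg5
      obtain ⟨hg1, hgm2⟩ := (hmem2 R2 g).mp hgR2
      obtain ⟨_, hgm5⟩ := (hmem5 R5 g).mp hgR5
      have hd2 : orderOf g ∣ 4 := by
        rw [← hcard2 R2]; exact Subgroup.orderOf_dvd_natCard _ hgm2
      have hd5 : orderOf g ∣ 5 := by
        rw [← hcard5 R5]; exact Subgroup.orderOf_dvd_natCard _ hgm5
      have : orderOf g = 1 := Nat.eq_one_of_dvd_coprimes (by norm_num) hd2 hd5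
      exact hg1 (orderOf_eq_one_iff.mp this)
    have hle : (S2 ∪ S5).card ≤ Fintype.card G := Finset.card_le_univ _
    rw [Finset.card_union_of_disjoint hdisjS, hS2card, hS5card,
      ← Nat.card_eq_fintype_card, hcard] at hle
    omega
  · push_neg at hPQ
    obtain ⟨P1, Q1, hne, hD⟩ := hPQ
    set D := (P1 : Subgroup G) ⊓ (Q1 : Subgroup G) with hDdef
    have hDle : Nat.card D ∣ 4 := by
      rw [← hcard2 P1]; exact Subgroup.card_dvd_of_le inf_le_left
    have hD1 : Nat.card D ≠ 1 := fun h => hD (Subgroup.card_eq_one.mp h)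
    have hD4 : Nat.card D ≠ 4 := by
      intro h
      have h1 : D = (P1 : Subgroup G) :=
        Subgroup.eq_of_le_of_card_ge inf_le_left (by rw [hcard2 P1, h])
      have h2 : D = (Q1 : Subgroup G) :=
        Subgroup.eq_of_le_of_card_ge inf_le_right (by rw [hcard2 Q1, h])
      exact hne (Sylow.ext (h1 ▸ h2))
    have hcommP : ∀ a b : (P1 : Subgroup G), a * b = b * a :=
      IsPGroup.commutative_of_card_eq_prime_sq (p := 2) (by rw [hcard2 P1]; norm_num)
    have hcommQ : ∀ a b : (Q1 : Subgroup G), a * b = b * a :=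
      IsPGroup.commutative_of_card_eq_prime_sq (p := 2) (by rw [hcard2 Q1]; norm_num)
    have key : ∀ (R : Subgroup G), (∀ a b : R, a * b = b * a) → D ≤ R →
        R ≤ Subgroup.normalizer (D : Set G) := by
      intro R hcomm hDR x hx
      rw [Subgroup.mem_normalizer_iff]
      intro n
      have hcm : ∀ m : G, m ∈ R → x * m = m * x := by
        intro m hm
        have := hcomm ⟨x, hx⟩ ⟨m, hm⟩
        exact congrArg Subtype.val this
      constructor
      · intro hn
        have h1 : x * n * x⁻¹ = n := by
          rw [hcm n (hDR hn)]; group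
        rwa [h1]
      · intro hn
        have hnR : n ∈ R := by
          have h2 := R.mul_mem (R.mul_mem (R.inv_mem hx) (hDR hn)) hx
          have h3 : x⁻¹ * (x * n * x⁻¹) * x = n := by group
          rwa [h3] at h2
        have h1 : x * n * x⁻¹ = n := by
          rw [hcm n hnR]; group
        rwa [h1] at hn
    have hPn : (P1 : Subgroup G) ≤ Subgroup.normalizer (D : Set G) := key _ hcommP inf_le_left
    have hQn : (Q1 : Subgroup G) ≤ Subgroup.normalizer (D : Set G) := key _ hcommQ inf_le_right
    set N := Subgroup.normalizer (D : Set G) with hNdef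
    have hNtop : N ≠ ⊤ := by
      intro h
      rcases (Subgroup.normalizer_eq_top_iff.mp h).eq_bot_or_eq_top with h' | h'
      · exact hD h'
      · rw [h', Subgroup.card_top, hcard] at hDle; norm_num at hDle
    have hidxN : 5 ≤ N.index := aux_five_le_index hcard _ hNtop
    have hcmul : Nat.card N * N.index = 60 := by
      rw [← hcard]; exact Subgroup.card_mul_index N
    have h4N : (4 : ℕ) ∣ Nat.card N := by
      rw [← hcard2 P1]; exact Subgroup.card_dvd_of_le hPn
    have hN60 : Nat.card N ∣ 60 := by
      rw [← hcard]; exact Subgroup.card_subgroup_dvd_card N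
    have hNne4 : Nat.card N ≠ 4 := by
      intro h
      have h1 : (P1 : Subgroup G) = N :=
        Subgroup.eq_of_le_of_card_ge hPn (by rw [hcard2 P1, h])
      have h2 : (Q1 : Subgroup G) = N :=
        Subgroup.eq_of_le_of_card_ge hQn (by rw [hcard2 Q1, h])
      exact hne (Sylow.ext (h1.trans h2.symm))
    have hNle : Nat.card N ≤ 12 := by
      by_contra hlt
      push_neg at hlt
      nlinarith [hcmul, hidxN]
    have hpos : 0 < Nat.card N := Nat.card_pos
    have hNcases : Nat.card N = 8 ∨ Nat.card N = 12 := by omega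
    rcases hNcases with h | h
    · rw [h] at hN60; norm_num at hN60
    · rw [h] at hcmul
      exact ⟨N, by omega⟩

end Aux

/-- Every simple group of order 60 is isomorphic to the alternating group `A₅`. -/
theorem simple_order_sixty_iso_A5
    (G : Type*) [Group G] [IsSimpleGroup G] (hcard : Nat.card G = 60) :
    Nonempty (G ≃* alternatingGroup (Fin 5)) := by
  obtain ⟨N, hN⟩ := aux_exists_index_five hcard
  exact aux_iso_of_index_five hcard N hN
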